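/- Consider the time-homogeneous linear–quadratic problem with constant matrices B ∈ ℝ^{d×m}, Σ ∈ ℝ^{d×d}, jump sizes α_i ∈ ℝ and intensities λ_i ≥ 0 (i = 1,…,d), R an m × m symmetric positive definite matrix, Q a d × d symmetric matrix, discount rate β > 0, entropy weight γ > 0, running reward f(x, u) = −(uᵀRu + xᵀQx), and generator (𝓛^u φ)(x) = (Bu)·∇φ(x) + (1/2) Tr(ΣΣᵀ ∇²φ(x)) + Σ_{i=1}^d λ_i[φ(x + α_i e_i) − φ(x) − α_i ∂_{x_i} φ(x)]. Suppose H is a d × d symmetric matrix solving the algebraic Riccati equation 0 = β H + Q − H B R⁻¹ Bᵀ H, and set g := β⁻¹ [ Tr(ΣΣᵀH) + Σ_{i=1}^d λ_i α_i² H_{ii} + (γ/2)(m log(πγ) − log det R) ]. Then V(x) := xᵀHx + g satisfies, for every x ∈ ℝ^d, β V(x) = γ log ∫_{ℝ^m} exp( ((𝓛^u V)(x) + f(x, u))/γ ) du. -/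

import Mathlib

/-! For the quadratic `V(x) = xᵀHx + g` the generator is affine in the control: the drift gives
`2 (BᵀHx)·u`, the diffusion `Tr(ΣΣᵀH)` and the `i`-th compensated jump `λᵢαᵢ²Hᵢᵢ`. The exponent is
then a concave quadratic in `u`; completing the square around `R⁻¹BᵀHx` leaves a Gaussian integral,
`∫ exp(-uᵀRu/γ) du = (πγ)^{m/2} / √(det R)` (substitute `v = Tu` with `R = TᵀT`), times
`exp(xᵀHBR⁻¹BᵀHx/γ)`, and the Riccati equation turns `xᵀHBR⁻¹BᵀHx - xᵀQx` into `βxᵀHx`. -/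

open Matrix MeasureTheory

/-- Gradient of a function on `ℝ^d` (coordinatewise, via the Fréchet derivative). -/
noncomputable def gradientVec {d : ℕ} (φ : (Fin d → ℝ) → ℝ) (x : Fin d → ℝ) : Fin d → ℝ :=
  fun i => fderiv ℝ φ x (Pi.single i 1)

/-- Hessian matrix of a function on `ℝ^d`. -/
noncomputable def hessianMat {d : ℕ} (φ : (Fin d → ℝ) → ℝ) (x : Fin d → ℝ) :
    Matrix (Fin d) (Fin d) ℝ :=
  fun i j => fderiv ℝ (fun y => fderiv ℝ φ y (Pi.single i 1)) x (Pi.single j 1)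

/-- The controlled generator of the linear–quadratic jump-diffusion. -/
noncomputable def lqGen {d m : ℕ} (B : Matrix (Fin d) (Fin m) ℝ)
    (S : Matrix (Fin d) (Fin d) ℝ) (α lam : Fin d → ℝ)
    (u : Fin m → ℝ) (φ : (Fin d → ℝ) → ℝ) (x : Fin d → ℝ) : ℝ :=
  B.mulVec u ⬝ᵥ gradientVec φ x
    + (1 / 2) * Matrix.trace (S * Sᵀ * hessianMat φ x)
    + ∑ i, lam i *
        (φ (x + α i • (Pi.single i 1 : Fin d → ℝ)) - φ x - α i * gradientVec φ x i)
open Real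

section QuadraticForm

variable {ι : Type*} [Fintype ι]

lemma add_dotProduct_mulVec_add {α : Type*} [CommRing α] (H : Matrix ι ι α) (x y : ι → α) :
    (x + y) ⬝ᵥ H *ᵥ (x + y) = x ⬝ᵥ H *ᵥ x + y ⬝ᵥ (H + Hᵀ) *ᵥ x + y ⬝ᵥ H *ᵥ y := by
  simp only [mulVec_add, add_mulVec, dotProduct_add, add_dotProduct, dotProduct_mulVec x,
    ← mulVec_transpose]
  rw [dotProduct_comm (Hᵀ *ᵥ x) y]
  ring

lemma add_smul_single_dotProduct_mulVec_sub {α : Type*} [CommRing α] [DecidableEq ι]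
    (H : Matrix ι ι α) (x : ι → α) (a : α) (i : ι) :
    (x + a • Pi.single i 1) ⬝ᵥ H *ᵥ (x + a • Pi.single i 1) - x ⬝ᵥ H *ᵥ x
      - a * ((H + Hᵀ) *ᵥ x) i = a ^ 2 * H i i := by
  simp only [add_dotProduct_mulVec_add, smul_dotProduct, mulVec_smul, dotProduct_smul,
    single_one_dotProduct, mulVec_single_one, col_apply, smul_eq_mul]
  ring

lemma transpose_mulVec_dotProduct_mulVec {α : Type*} [CommRing α] {κ : Type*} [Fintype κ]
    (A : Matrix ι κ α) (M : Matrix κ κ α) (x : ι → α) :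
    Aᵀ *ᵥ x ⬝ᵥ M *ᵥ (Aᵀ *ᵥ x) = x ⬝ᵥ (A * M * Aᵀ) *ᵥ x := by
  rw [← mulVec_mulVec, ← mulVec_mulVec, dotProduct_mulVec x A, ← mulVec_transpose]

lemma hasLineDerivAt_quadForm (H : Matrix ι ι ℝ) (x v : ι → ℝ) :
    HasLineDerivAt ℝ (fun y => y ⬝ᵥ H *ᵥ y) (v ⬝ᵥ (H + Hᵀ) *ᵥ x) x v := by
  have hpoly := (((hasDerivAt_id (0 : ℝ)).mul_const (v ⬝ᵥ (H + Hᵀ) *ᵥ x)).const_add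
    (x ⬝ᵥ H *ᵥ x)).add ((hasDerivAt_pow 2 (0 : ℝ)).mul_const (v ⬝ᵥ H *ᵥ v))
  unfold HasLineDerivAt
  convert hpoly using 1
  · funext t
    simp only [add_dotProduct_mulVec_add, smul_dotProduct, mulVec_smul, dotProduct_smul,
      smul_eq_mul, id, Pi.add_apply]
    ring
  · simp

lemma fderiv_quadForm_apply (H : Matrix ι ι ℝ) (x v : ι → ℝ) :
    fderiv ℝ (fun y => y ⬝ᵥ H *ᵥ y) x v = v ⬝ᵥ (H + Hᵀ) *ᵥ x := by
  have hdiff : DifferentiableAt ℝ (fun y : ι → ℝ => y ⬝ᵥ H *ᵥ y) x := by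
    simp only [dotProduct, mulVec]
    fun_prop
  rw [← hdiff.lineDeriv_eq_fderiv, (hasLineDerivAt_quadForm H x v).lineDeriv]

lemma fderiv_mulVec_apply (M : Matrix ι ι ℝ) (i : ι) (x v : ι → ℝ) :
    fderiv ℝ (fun y => (M *ᵥ y) i) x v = (M *ᵥ v) i :=
  congrArg (· v) (((LinearMap.proj i ∘ₗ M.mulVecLin).toContinuousLinearMap).fderiv (x := x))

end QuadraticForm

section GaussianIntegral

variable {ι : Type*} [Fintype ι]

lemma integral_exp_neg_sq_div (γ : ℝ) : ∫ x : ℝ, exp (-x ^ 2 / γ) = √(π * γ) := by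
  simpa [neg_div, div_eq_inv_mul, div_inv_eq_mul, mul_comm] using integral_gaussian γ⁻¹

lemma integral_exp_neg_dotProduct_self_div (γ : ℝ) :
    ∫ v : ι → ℝ, exp (-(v ⬝ᵥ v) / γ) = √(π * γ) ^ Fintype.card ι := by
  have hprod : (fun v : ι → ℝ => exp (-(v ⬝ᵥ v) / γ)) = fun v => ∏ i, exp (-v i ^ 2 / γ) := by
    funext v
    simp only [← exp_sum, dotProduct, ← Finset.sum_div, ← Finset.sum_neg_distrib, sq]
  rw [hprod, volume_pi, integral_fintype_prod_eq_pow (fun x : ℝ => exp (-x ^ 2 / γ)),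
    integral_exp_neg_sq_div]

lemma integral_comp_mulVec [DecidableEq ι] {E : Type*} [NormedAddCommGroup E] [NormedSpace ℝ E]
    {M : Matrix ι ι ℝ} (hM : M.det ≠ 0) (f : (ι → ℝ) → E) :
    ∫ v, f (M *ᵥ v) = |M.det|⁻¹ • ∫ u, f u := by
  have hemb : MeasurableEmbedding (toLin' M) :=
    (LinearMap.isClosedEmbedding_of_injective (LinearMap.ker_eq_bot.2
      (mulVec_injective_iff_isUnit.2 ((isUnit_iff_isUnit_det M).2 hM.isUnit)))).measurableEmbedding
  simp_rw [← toLin'_apply]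
  rw [← hemb.integral_map, Real.map_matrix_volume_pi_eq_smul_volume_pi hM]
  simp

open scoped MatrixOrder in
lemma Matrix.PosSemidef.exists_eq_transpose_mul_self [DecidableEq ι] {R : Matrix ι ι ℝ}
    (hR : R.PosSemidef) :
    ∃ T : Matrix ι ι ℝ, R = Tᵀ * T := by
  refine ⟨CFC.sqrt R, ?_⟩
  have hT : (CFC.sqrt R)ᵀ = CFC.sqrt R :=
    (nonneg_iff_posSemidef.1 (CFC.sqrt_nonneg R)).isHermitian
  rw [hT, CFC.sqrt_mul_sqrt_self R hR.nonneg]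

lemma integral_exp_neg_quadForm_div [DecidableEq ι] {R : Matrix ι ι ℝ} (hR : R.PosDef) (γ : ℝ) :
    ∫ w : ι → ℝ, exp (-(w ⬝ᵥ R *ᵥ w) / γ) = √(π * γ) ^ Fintype.card ι / √R.det := by
  obtain ⟨T, rfl⟩ := hR.posSemidef.exists_eq_transpose_mul_self
  have hdet : (Tᵀ * T).det = T.det ^ 2 := by rw [det_mul, det_transpose, sq]
  have hT : T.det ≠ 0 := fun h => by simpa [hdet, h] using hR.det_pos
  have hquad (w : ι → ℝ) : w ⬝ᵥ (Tᵀ * T) *ᵥ w = T *ᵥ w ⬝ᵥ T *ᵥ w := by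
    rw [← mulVec_mulVec, dotProduct_mulVec, vecMul_transpose]
  simp_rw [hquad]
  rw [integral_comp_mulVec hT (fun v => exp (-(v ⬝ᵥ v) / γ)),
    integral_exp_neg_dotProduct_self_div, hdet, sqrt_sq_eq_abs, smul_eq_mul, inv_mul_eq_div]

lemma integral_exp_two_dotProduct_sub_quadForm_div [DecidableEq ι] {R : Matrix ι ι ℝ}
    (hR : R.IsSymm) (hdet : IsUnit R.det) (c : ι → ℝ) (γ : ℝ) :
    ∫ u : ι → ℝ, exp ((2 * (c ⬝ᵥ u) - u ⬝ᵥ R *ᵥ u) / γ)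
      = exp (c ⬝ᵥ R⁻¹ *ᵥ c / γ) * ∫ w : ι → ℝ, exp (-(w ⬝ᵥ R *ᵥ w) / γ) := by
  set b := R⁻¹ *ᵥ c
  have hRb : R *ᵥ b = c := by rw [mulVec_mulVec, mul_nonsing_inv R hdet, one_mulVec]
  rw [← integral_add_right_eq_self _ b, ← integral_const_mul]
  congr 1 with w
  rw [← exp_add, ← add_div]
  congr 2
  rw [add_dotProduct_mulVec_add, hR.eq, ← two_smul ℝ R, smul_mulVec, dotProduct_smul,
    dotProduct_mulVec b, ← mulVec_transpose, hR.eq, hRb, dotProduct_add, dotProduct_comm b c,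
    smul_eq_mul]
  ring

end GaussianIntegral

section Generator

variable {d : ℕ}

lemma gradientVec_quadForm_add_const (H : Matrix (Fin d) (Fin d) ℝ) (g : ℝ) (x : Fin d → ℝ) :
    gradientVec (fun y => y ⬝ᵥ H *ᵥ y + g) x = (H + Hᵀ) *ᵥ x := by
  funext i
  rw [gradientVec, fderiv_add_const, fderiv_quadForm_apply, single_one_dotProduct]

lemma hessianMat_quadForm_add_const (H : Matrix (Fin d) (Fin d) ℝ) (g : ℝ) (x : Fin d → ℝ) :
    hessianMat (fun y => y ⬝ᵥ H *ᵥ y + g) x = H + Hᵀ := by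
  funext i j
  change fderiv ℝ (fun y => gradientVec (fun y => y ⬝ᵥ H *ᵥ y + g) y i) x (Pi.single j 1) = _
  simp only [gradientVec_quadForm_add_const, fderiv_mulVec_apply, mulVec_single_one]
  rfl

lemma lqGen_quadForm_add_const {m : ℕ} (B : Matrix (Fin d) (Fin m) ℝ)
    (S : Matrix (Fin d) (Fin d) ℝ) (α lam : Fin d → ℝ) (u : Fin m → ℝ)
    {H : Matrix (Fin d) (Fin d) ℝ} (hH : H.IsSymm) (g : ℝ) (x : Fin d → ℝ) :
    lqGen B S α lam u (fun y => y ⬝ᵥ H *ᵥ y + g) x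
      = 2 * (B *ᵥ u ⬝ᵥ H *ᵥ x) + trace (S * Sᵀ * H) + ∑ i, lam i * α i ^ 2 * H i i := by
  have hjump (i : Fin d) :
      lam i * ((x + α i • Pi.single i 1) ⬝ᵥ H *ᵥ (x + α i • Pi.single i 1) + g
        - (x ⬝ᵥ H *ᵥ x + g) - α i * ((H + Hᵀ) *ᵥ x) i) = lam i * α i ^ 2 * H i i := by
    rw [mul_assoc, ← add_smul_single_dotProduct_mulVec_sub]
    ring
  simp only [lqGen, gradientVec_quadForm_add_const, hessianMat_quadForm_add_const, hjump]
  simp only [hH.eq, ← two_smul ℝ H, smul_mulVec, dotProduct_smul, mul_smul_comm, trace_smul,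
    smul_eq_mul]
  ring

end Generator

theorem lq_homogeneous_entropy_hjb_general
    (d m : ℕ)
    (B : Matrix (Fin d) (Fin m) ℝ) (S : Matrix (Fin d) (Fin d) ℝ)
    (α lam : Fin d → ℝ)
    (R : Matrix (Fin m) (Fin m) ℝ) (hR : R.PosDef)
    (Q : Matrix (Fin d) (Fin d) ℝ)
    (β γ : ℝ) (hβ : 0 < β) (hγ : 0 < γ)
    (H : Matrix (Fin d) (Fin d) ℝ) (hHsymm : H.IsSymm)
    (hH : 0 = β • H + Q - H * B * R⁻¹ * Bᵀ * H)
    (g : ℝ)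
    (hg : g = β⁻¹ * (Matrix.trace (S * Sᵀ * H) + (∑ i, lam i * α i ^ 2 * H i i)
        + (γ / 2) * (m * Real.log (Real.pi * γ) - Real.log R.det)))
    (V : (Fin d → ℝ) → ℝ) (hV : V = fun x => x ⬝ᵥ H.mulVec x + g) :
    ∀ x : Fin d → ℝ,
      β * V x = γ * Real.log (∫ u : Fin m → ℝ,
          Real.exp ((lqGen B S α lam u V x
              - (u ⬝ᵥ R.mulVec u + x ⬝ᵥ Q.mulVec x)) / γ)) := by
  intro x
  subst hV
  set c := Bᵀ *ᵥ (H *ᵥ x)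
  set K := trace (S * Sᵀ * H) + ∑ i, lam i * α i ^ 2 * H i i - x ⬝ᵥ Q *ᵥ x with hK
  have hdrift (u : Fin m → ℝ) : B *ᵥ u ⬝ᵥ H *ᵥ x = c ⬝ᵥ u := by
    rw [dotProduct_comm, dotProduct_mulVec, ← mulVec_transpose]
  have hintegrand : (fun u => exp ((lqGen B S α lam u (fun y => y ⬝ᵥ H *ᵥ y + g) x
      - (u ⬝ᵥ R *ᵥ u + x ⬝ᵥ Q *ᵥ x)) / γ))
      = fun u => exp (K / γ) * exp ((2 * (c ⬝ᵥ u) - u ⬝ᵥ R *ᵥ u) / γ) := by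
    funext u
    rw [← exp_add, ← add_div]
    congr 2
    rw [lqGen_quadForm_add_const B S α lam u hHsymm, hdrift, hK]
    ring
  have hriccati : c ⬝ᵥ R⁻¹ *ᵥ c = β * (x ⬝ᵥ H *ᵥ x) + x ⬝ᵥ Q *ᵥ x := by
    have hc : c = (H * B)ᵀ *ᵥ x := by rw [transpose_mul, hHsymm.eq, ← mulVec_mulVec]
    rw [hc, transpose_mulVec_dotProduct_mulVec, transpose_mul, hHsymm.eq, ← Matrix.mul_assoc,
      (sub_eq_zero.1 hH.symm).symm, add_mulVec, smul_mulVec, dotProduct_add, dotProduct_smul,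
      smul_eq_mul]
  have hRsymm : R.IsSymm := isHermitian_iff_isSymm.1 hR.isHermitian
  rw [hintegrand, integral_const_mul,
    integral_exp_two_dotProduct_sub_quadForm_div hRsymm hR.det_pos.ne'.isUnit c γ,
    integral_exp_neg_quadForm_div hR, Fintype.card_fin, hriccati]
  have hdet := hR.det_pos
  have hπγ : 0 < π * γ := by positivity
  rw [log_mul (exp_ne_zero _) (by positivity), log_mul (exp_ne_zero _) (by positivity),
    log_exp, log_exp, log_div (by positivity) (by positivity), log_pow, log_sqrt hπγ.le,
    log_sqrt hdet.le, hg]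
  field_simp
  ring

/-- Stationary form of the entropy-regularized HJB equation for the time-homogeneous
LQ jump-diffusion problem: if the symmetric matrix `H` solves the algebraic Riccati
equation `0 = βH + Q − HBR⁻¹BᵀH` and `g` is given explicitly, then
`V(x) = xᵀHx + g` satisfies `βV(x) = γ log ∫_{ℝ^m} exp((𝓛^uV(x) + f(x,u))/γ) du`. -/
theorem lq_homogeneous_entropy_hjb
    (d m : ℕ)
    (B : Matrix (Fin d) (Fin m) ℝ) (S : Matrix (Fin d) (Fin d) ℝ)
    (α lam : Fin d → ℝ) (hlam : ∀ i, 0 ≤ lam i)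
    (R : Matrix (Fin m) (Fin m) ℝ) (hR : R.PosDef)
    (Q : Matrix (Fin d) (Fin d) ℝ) (hQ : Q.IsSymm)
    (β γ : ℝ) (hβ : 0 < β) (hγ : 0 < γ)
    (H : Matrix (Fin d) (Fin d) ℝ) (hHsymm : H.IsSymm)
    (hH : 0 = β • H + Q - H * B * R⁻¹ * Bᵀ * H)
    (g : ℝ)
    (hg : g = β⁻¹ * (Matrix.trace (S * Sᵀ * H) + (∑ i, lam i * α i ^ 2 * H i i)
        + (γ / 2) * (m * Real.log (Real.pi * γ) - Real.log R.det)))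
    (V : (Fin d → ℝ) → ℝ) (hV : V = fun x => x ⬝ᵥ H.mulVec x + g) :
    ∀ x : Fin d → ℝ,
      β * V x = γ * Real.log (∫ u : Fin m → ℝ,
          Real.exp ((lqGen B S α lam u V x
              - (u ⬝ᵥ R.mulVec u + x ⬝ᵥ Q.mulVec x)) / γ)) :=
  lq_homogeneous_entropy_hjb_general d m B S α lam R hR Q β γ hβ hγ H hHsymm hH g hg V hV
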